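/- Let G_ω be an increasing weighted tree with vertex set {x_1,…,x_n}, let I = I(G_ω) ⊆ R = K[x_1,…,x_n] be its weighted edge ideal, let S be a nonempty independent set of G, and let I[S] = (I : (∏_{x∈S} x)^∞) be the saturation of I with respect to the variables in S. Let T^1,…,T^k be the connected components of G_S meeting N_G(S), with V(T^i) ∩ N_G(S) = {r_i}, and T^{k+1},…,T^ℓ the remaining components. Then I[S] = Σ_{i=1}^k (r_i^{ν_S(r_i)}, I(T^i_ω)) + Σ_{i=k+1}^ℓ I(T^i_ω), where I(T^i_ω) = (0) if T^i consists of a single vertex. -/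

import Mathlib

open SimpleGraph

noncomputable section

variable {V : Type*}

/-- `p 0, p 1, …, p k` is a simple path in `G`: the vertices are pairwise distinct and
consecutive vertices are adjacent. -/
def IsSimplePathOn (G : SimpleGraph V) (p : ℕ → V) (k : ℕ) : Prop :=
  (∀ i ≤ k, ∀ j ≤ k, p i = p j → i = j) ∧ ∀ i < k, G.Adj (p i) (p (i + 1))

/-- The path `p 0, …, p k` is increasing for the weight `ω`. -/
def IsIncreasingPath (ω : V → V → ℕ) (p : ℕ → V) (k : ℕ) : Prop :=
  ∀ i, i + 2 ≤ k → ω (p i) (p (i + 1)) ≤ ω (p (i + 1)) (p (i + 2))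

/-- A leaf is a vertex of degree one. -/
def IsLeafVertex (G : SimpleGraph V) (x : V) : Prop := ∃! y, G.Adj x y

/-- `(G_ω, v)` is an increasing weighted tree with root `v`: `G` is a tree and every
simple path from a leaf to `v` is increasing. -/
def IsIncreasingWeightedTree (G : SimpleGraph V) (ω : V → V → ℕ) (v : V) : Prop :=
  G.IsTree ∧ ∀ (p : ℕ → V) (k : ℕ), IsSimplePathOn G p k → IsLeafVertex G (p 0) → p k = v →
    IsIncreasingPath ω p k

/-- `S` is an independent set of `G`. -/
def IsIndepSetOn (G : SimpleGraph V) (S : Set V) : Prop :=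
  ∀ a ∈ S, ∀ b ∈ S, ¬ G.Adj a b

/-- `N_G(S)`, the neighbourhood of the set `S`. -/
def setNbhd (G : SimpleGraph V) (S : Set V) : Set V :=
  {u | u ∉ S ∧ ∃ z ∈ S, G.Adj u z}

/-- `ν_S(u) = min { ω(uz) ∣ z ∈ S ∩ N_G(u) }`. -/
def nuWt (G : SimpleGraph V) (ω : V → V → ℕ) (S : Set V) (u : V) : ℕ :=
  sInf {w | ∃ z ∈ S, G.Adj u z ∧ w = ω u z}

/-- The graph `G_S`: its vertices are those outside `S`, its edges are those of `G ∖ S`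
except that every edge `uz` with `u ∈ N_G(S)` and `ω(uz) ≥ ν_S(u)` is removed. -/
def GSgraph (G : SimpleGraph V) (ω : V → V → ℕ) (S : Set V) : SimpleGraph V where
  Adj a b := G.Adj a b ∧ a ∉ S ∧ b ∉ S ∧
    (a ∈ setNbhd G S → ω a b < nuWt G ω S a) ∧
    (b ∈ setNbhd G S → ω b a < nuWt G ω S b)
  symm := by
    constructor
    rintro a b ⟨h1, h2, h3, h4, h5⟩
    exact ⟨h1.symm, h3, h2, h5, h4⟩
  loopless := by
    constructor
    rintro a ⟨h, -⟩
    exact G.loopless.irrefl a h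

open MvPolynomial

/-- The weighted edge ideal `I(G_ω) = ((x_i x_j)^{ω(x_i x_j)} ∣ x_i x_j ∈ E(G))`. -/
def weightedEdgeIdeal (n : ℕ) (K : Type*) [Field K]
    (G : SimpleGraph (Fin n)) (ω : Fin n → Fin n → ℕ) : Ideal (MvPolynomial (Fin n) K) :=
  Ideal.span {f | ∃ i j : Fin n, G.Adj i j ∧ f = (X i * X j) ^ ω i j}

/-- The maximal graded ideal `𝔪 = (x_1, …, x_n)`. -/
def maxGradedIdeal (n : ℕ) (K : Type*) [Field K] : Ideal (MvPolynomial (Fin n) K) :=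
  Ideal.span (Set.range (X : Fin n → MvPolynomial (Fin n) K))

/-- `μ(x) = max { ω(xy) ∣ y ∈ N_G(x) }`. -/
def muWt (G : SimpleGraph V) (ω : V → V → ℕ) (x : V) : ℕ :=
  sSup {w | ∃ y, G.Adj x y ∧ w = ω x y}

/-- `I[W] = (I : (∏_{x ∈ W} x)^∞)`, the saturation of `I` with respect to the set of
variables `W`. -/
def satSet {n : ℕ} {K : Type*} [Field K] (I : Ideal (MvPolynomial (Fin n) K))
    (W : Finset (Fin n)) : Ideal (MvPolynomial (Fin n) K) :=
  ⨆ m : ℕ, I.colon (Ideal.span {(∏ x ∈ W, X x : MvPolynomial (Fin n) K) ^ m})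

/-- The weighted edge ideal of the connected component `c` of `H` (viewed as a weighted
subgraph): it is `(0)` when the component has no edges, e.g. for a trivial component. -/
def componentEdgeIdeal (n : ℕ) (K : Type*) [Field K] (H : SimpleGraph (Fin n))
    (ω : Fin n → Fin n → ℕ) (c : H.ConnectedComponent) : Ideal (MvPolynomial (Fin n) K) :=
  Ideal.span {f | ∃ i j : Fin n, H.Adj i j ∧ i ∈ c.supp ∧ f = (X i * X j) ^ ω i j}

/-! The saturation of a monomial ideal with respect to the variables of `S` is generated by its
generators with those variables set to `1`. For a weighted edge ideal and `S` independent, these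
are `u ^ ω(uz)` for edges `uz` with `z ∈ S`, and `(ab) ^ ω(ab)` for edges `ab` avoiding `S`. For a
fixed `u ∈ N_G(S)` the former are multiples of `u ^ ν_S(u)`, and an edge of `G ∖ S` that is not an
edge of `G_S` is a multiple of `u ^ ν_S(u)` for one of its endpoints `u ∈ N_G(S)`. Hence
`I[S] = (u ^ ν_S(u) ∣ u ∈ N_G(S)) + I(G_S)`, and `I(G_S)` is the sum of the edge ideals of the
components of `G_S`; regrouping these by the components containing the `r_i` gives the claim. -/

section MonomialIdeals

variable {σ R : Type*} [CommSemiring R]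

theorem X_mul_X_pow_eq_monomial (i j : σ) (w : ℕ) :
    (X i * X j : MvPolynomial σ R) ^ w = monomial (Finsupp.single i w + Finsupp.single j w) 1 := by
  rw [mul_pow, X_pow_eq_monomial, X_pow_eq_monomial, monomial_mul, one_mul]

theorem pow_prod_X_eq_monomial (W : Finset σ) (m : ℕ) :
    (∏ x ∈ W, X x : MvPolynomial σ R) ^ m = monomial (∑ x ∈ W, Finsupp.single x m) 1 := by
  classical
  rw [← Finset.prod_pow]
  induction W using Finset.induction_on with
  | empty => simp
  | insert _ _ h ih =>
    rw [Finset.prod_insert h, Finset.sum_insert h, ih, X_pow_eq_monomial, monomial_mul, one_mul]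

theorem sum_single_apply_of_notMem {W : Finset σ} {t : σ} (ht : t ∉ W) (m : ℕ) :
    (∑ x ∈ W, Finsupp.single x m) t = 0 := by
  rw [Finsupp.finsetSum_apply]
  exact Finset.sum_eq_zero fun x hx => Finsupp.single_eq_of_ne (ne_of_mem_of_not_mem hx ht).symm

theorem mem_span_monomial_of_mul_monomial_mem {D D' : Set (σ →₀ ℕ)} {s : σ →₀ ℕ}
    (hD : ∀ e ∈ D, ∀ x, e ≤ x + s → ∃ e' ∈ D', e' ≤ x) {f : MvPolynomial σ R}
    (hf : f * monomial s 1 ∈ Ideal.span ((fun d => monomial d (1 : R)) '' D)) :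
    f ∈ Ideal.span ((fun d => monomial d (1 : R)) '' D') := by
  rw [mem_ideal_span_monomial_image] at hf ⊢
  intro x hx
  obtain ⟨e, he, hle⟩ := hf (x + s) (by
    rwa [mem_support_iff, coeff_mul_monomial, mul_one, ← mem_support_iff])
  exact hD e he x hle

end MonomialIdeals

section Exponents

variable (G : SimpleGraph V) (ω : V → V → ℕ) (S : Set V)

def edgeExponents : Set (V →₀ ℕ) :=
  {d | ∃ a b, G.Adj a b ∧ d = Finsupp.single a (ω a b) + Finsupp.single b (ω a b)}

def saturationExponents : Set (V →₀ ℕ) :=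
  {d | ∃ u z, u ∉ S ∧ z ∈ S ∧ G.Adj u z ∧ d = Finsupp.single u (ω u z)} ∪
    {d | ∃ a b, G.Adj a b ∧ a ∉ S ∧ b ∉ S ∧
      d = Finsupp.single a (ω a b) + Finsupp.single b (ω a b)}

variable {G ω S}

theorem exists_mem_saturationExponents_le (hsym : ∀ a b, ω a b = ω b a)
    (hS : IsIndepSetOn G S) {e : V →₀ ℕ} (he : e ∈ edgeExponents G ω) {x s : V →₀ ℕ}
    (hs : ∀ t ∉ S, s t = 0) (hle : e ≤ x + s) :
    ∃ e' ∈ saturationExponents G ω S, e' ≤ x := by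
  classical
  obtain ⟨i, j, hij, rfl⟩ := he
  have hi := hle i
  have hj := hle j
  simp only [Finsupp.add_apply, Finsupp.single_eq_same, Finsupp.single_eq_of_ne hij.ne,
    Finsupp.single_eq_of_ne hij.ne.symm, add_zero, zero_add] at hi hj
  by_cases hiS : i ∈ S
  · have hjS : j ∉ S := fun hjS => hS i hiS j hjS hij
    refine ⟨_, Or.inl ⟨j, i, hjS, hiS, hij.symm, rfl⟩, ?_⟩
    rw [Finsupp.single_le_iff, ← hsym]
    simpa [hs j hjS] using hj
  by_cases hjS : j ∈ S
  · refine ⟨_, Or.inl ⟨i, j, hiS, hjS, hij, rfl⟩, ?_⟩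
    rw [Finsupp.single_le_iff]
    simpa [hs i hiS] using hi
  refine ⟨_, Or.inr ⟨i, j, hij, hiS, hjS, rfl⟩, fun t => ?_⟩
  by_cases ht : t ∈ S
  · simp [ne_of_mem_of_not_mem ht hiS, ne_of_mem_of_not_mem ht hjS]
  · simpa [hs t ht] using hle t

theorem nuWt_le {u z : V} (hz : z ∈ S) (h : G.Adj u z) : nuWt G ω S u ≤ ω u z :=
  Nat.sInf_le ⟨z, hz, h, rfl⟩

theorem exists_nuWt_eq {u : V} (hu : u ∈ setNbhd G S) :
    ∃ z ∈ S, G.Adj u z ∧ nuWt G ω S u = ω u z := by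
  obtain ⟨-, z, hz, h⟩ := hu
  obtain ⟨z', hz', h', hν⟩ :=
    Nat.sInf_mem (s := {w | ∃ z ∈ S, G.Adj u z ∧ w = ω u z}) ⟨ω u z, z, hz, h, rfl⟩
  exact ⟨z', hz', h', hν⟩

theorem GSgraph_adj_or_nuWt_le {a b : V} (h : G.Adj a b) (ha : a ∉ S) (hb : b ∉ S) :
    (GSgraph G ω S).Adj a b ∨ (a ∈ setNbhd G S ∧ nuWt G ω S a ≤ ω a b) ∨
      (b ∈ setNbhd G S ∧ nuWt G ω S b ≤ ω b a) := by
  by_cases ha' : a ∈ setNbhd G S ∧ nuWt G ω S a ≤ ω a b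
  · exact Or.inr (Or.inl ha')
  by_cases hb' : b ∈ setNbhd G S ∧ nuWt G ω S b ≤ ω b a
  · exact Or.inr (Or.inr hb')
  exact Or.inl ⟨h, ha, hb, fun haN => lt_of_not_ge fun hle => ha' ⟨haN, hle⟩,
    fun hbN => lt_of_not_ge fun hle => hb' ⟨hbN, hle⟩⟩

end Exponents

theorem iSup_sup_iSup_eq_iSup_sup_sup_biSup {ι κ α : Type*} [CompleteLattice α]
    (a : ι → α) (b : κ → α) (g : ι → κ) :
    (⨆ i, a i) ⊔ (⨆ c, b c) = (⨆ i, a i ⊔ b (g i)) ⊔ ⨆ c ∈ {c | ∀ i, c ≠ g i}, b c := by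
  apply le_antisymm
  · refine sup_le (iSup_le fun i => le_sup_of_le_left (le_iSup_of_le i le_sup_left))
      (iSup_le fun c => ?_)
    by_cases hc : ∀ i, c ≠ g i
    · exact le_sup_of_le_right (le_iSup₂_of_le c hc le_rfl)
    · obtain ⟨i, rfl⟩ := not_forall_not.mp hc
      exact le_sup_of_le_left (le_iSup_of_le i le_sup_right)
  · exact sup_le (iSup_le fun i => sup_le (le_sup_of_le_left (le_iSup a i))
      (le_sup_of_le_right (le_iSup b (g i))))
      (iSup₂_le fun c _ => le_sup_of_le_right (le_iSup b c))

section EdgeIdeals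

variable {n : ℕ} {K : Type*} [Field K] (G : SimpleGraph (Fin n)) (ω : Fin n → Fin n → ℕ)

theorem weightedEdgeIdeal_eq_span_monomial :
    weightedEdgeIdeal n K G ω = Ideal.span ((fun d => monomial d 1) '' edgeExponents G ω) := by
  unfold weightedEdgeIdeal
  congr 1
  ext f
  constructor
  · rintro ⟨i, j, hij, rfl⟩
    exact ⟨_, ⟨i, j, hij, rfl⟩, (X_mul_X_pow_eq_monomial i j _).symm⟩
  · rintro ⟨d, ⟨i, j, hij, rfl⟩, rfl⟩
    exact ⟨i, j, hij, (X_mul_X_pow_eq_monomial i j _).symm⟩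

theorem weightedEdgeIdeal_eq_iSup_componentEdgeIdeal :
    weightedEdgeIdeal n K G ω = ⨆ c, componentEdgeIdeal n K G ω c := by
  apply le_antisymm
  · refine Ideal.span_le.mpr ?_
    rintro _ ⟨i, j, h, rfl⟩
    exact Ideal.mem_iSup_of_mem (G.connectedComponentMk i)
      (Ideal.subset_span ⟨i, j, h, rfl, rfl⟩)
  · exact iSup_le fun c => Ideal.span_mono fun f ⟨i, j, h, _, hf⟩ => ⟨i, j, h, hf⟩

theorem mem_satSet_of_mul_pow_mem {I : Ideal (MvPolynomial (Fin n) K)} {W : Finset (Fin n)}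
    {f : MvPolynomial (Fin n) K} (m : ℕ) (h : f * (∏ x ∈ W, X x) ^ m ∈ I) : f ∈ satSet I W :=
  Ideal.mem_iSup_of_mem m (Ideal.mem_colon_span_singleton.mpr h)

variable {G ω}

theorem satSet_weightedEdgeIdeal (hsym : ∀ a b, ω a b = ω b a) {S : Finset (Fin n)}
    (hS : IsIndepSetOn G ↑S) :
    satSet (weightedEdgeIdeal n K G ω) S =
      Ideal.span ((fun d => monomial d 1) '' saturationExponents G ω ↑S) := by
  apply le_antisymm
  · refine iSup_le fun m f hf => ?_
    rw [Ideal.mem_colon_span_singleton, pow_prod_X_eq_monomial,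
      weightedEdgeIdeal_eq_span_monomial] at hf
    exact mem_span_monomial_of_mul_monomial_mem (fun e he x hle =>
      exists_mem_saturationExponents_le hsym hS he
        (fun t ht => sum_single_apply_of_notMem ht m) hle) hf
  · refine Ideal.span_le.mpr ?_
    rintro _ ⟨d, ⟨u, z, -, hz, huz, rfl⟩ | ⟨a, b, hab, -, -, rfl⟩, rfl⟩
    · refine mem_satSet_of_mul_pow_mem (ω u z) ?_
      dsimp only
      rw [← X_pow_eq_monomial, ← Finset.mul_prod_erase S _ hz, mul_pow, ← mul_assoc, ← mul_pow]
      exact Ideal.mul_mem_right _ _ (Ideal.subset_span ⟨u, z, huz, rfl⟩)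
    · refine mem_satSet_of_mul_pow_mem 0 ?_
      dsimp only
      rw [pow_zero, mul_one, ← X_mul_X_pow_eq_monomial]
      exact Ideal.subset_span ⟨a, b, hab, rfl⟩

theorem span_saturationExponents_eq (hsym : ∀ a b, ω a b = ω b a) (S : Set (Fin n)) :
    Ideal.span ((fun d => monomial d (1 : K)) '' saturationExponents G ω S) =
      Ideal.span ((fun u => X u ^ nuWt G ω S u) '' setNbhd G S) ⊔
        weightedEdgeIdeal n K (GSgraph G ω S) ω := by
  have hX : ∀ u ∈ setNbhd G S, ∀ w, nuWt G ω S u ≤ w →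
      (X u : MvPolynomial (Fin n) K) ^ w ∈
        Ideal.span ((fun u => X u ^ nuWt G ω S u) '' setNbhd G S) :=
    fun u hu w hw => Ideal.mem_of_dvd _ (pow_dvd_pow _ hw) (Ideal.subset_span ⟨u, hu, rfl⟩)
  apply le_antisymm
  · refine Ideal.span_le.mpr ?_
    rintro _ ⟨d, ⟨u, z, hu, hz, huz, rfl⟩ | ⟨a, b, hab, ha, hb, rfl⟩, rfl⟩
    · dsimp only
      rw [SetLike.mem_coe, ← X_pow_eq_monomial]
      exact Ideal.mem_sup_left (hX u ⟨hu, z, hz, huz⟩ _ (nuWt_le hz huz))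
    · dsimp only
      rw [SetLike.mem_coe, ← X_mul_X_pow_eq_monomial]
      rcases GSgraph_adj_or_nuWt_le hab ha hb with h | ⟨haN, hle⟩ | ⟨hbN, hle⟩
      · exact Ideal.mem_sup_right (Ideal.subset_span ⟨a, b, h, rfl⟩)
      · rw [mul_pow]
        exact Ideal.mem_sup_left (Ideal.mul_mem_right _ _ (hX a haN _ hle))
      · rw [hsym, mul_pow]
        exact Ideal.mem_sup_left (Ideal.mul_mem_left _ _ (hX b hbN _ hle))
  · refine sup_le (Ideal.span_le.mpr ?_) (Ideal.span_le.mpr ?_)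
    · rintro _ ⟨u, hu, rfl⟩
      obtain ⟨z, hz, huz, hν⟩ := exists_nuWt_eq hu
      dsimp only
      rw [SetLike.mem_coe, hν, X_pow_eq_monomial]
      exact Ideal.subset_span ⟨_, Or.inl ⟨u, z, hu.1, hz, huz, rfl⟩, rfl⟩
    · rintro _ ⟨a, b, ⟨hab, ha, hb, -, -⟩, rfl⟩
      rw [SetLike.mem_coe, X_mul_X_pow_eq_monomial]
      exact Ideal.subset_span ⟨_, Or.inr ⟨a, b, hab, ha, hb, rfl⟩, rfl⟩

end EdgeIdeals

theorem saturation_decomposition_general {n : ℕ} (K : Type*) [Field K]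
    (G : SimpleGraph (Fin n)) (ω : Fin n → Fin n → ℕ)
    (hsym : ∀ a b, ω a b = ω b a)
    (S : Finset (Fin n)) (hS : IsIndepSetOn G ↑S)
    (k : ℕ) (r : Fin k → Fin n)
    (hrange : Set.range r = setNbhd G ↑S) :
    satSet (weightedEdgeIdeal n K G ω) S =
      (⨆ i : Fin k,
        (Ideal.span {(X (r i) : MvPolynomial (Fin n) K) ^ nuWt G ω ↑S (r i)} ⊔
          componentEdgeIdeal n K (GSgraph G ω ↑S) ω
            ((GSgraph G ω ↑S).connectedComponentMk (r i)))) ⊔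
      ⨆ c ∈ {c : (GSgraph G ω ↑S).ConnectedComponent |
          ∀ i : Fin k, c ≠ (GSgraph G ω ↑S).connectedComponentMk (r i)},
        componentEdgeIdeal n K (GSgraph G ω ↑S) ω c := by
  rw [satSet_weightedEdgeIdeal hsym hS, span_saturationExponents_eq hsym,
    weightedEdgeIdeal_eq_iSup_componentEdgeIdeal, ← hrange, ← Set.range_comp,
    ← Set.iUnion_singleton_eq_range, Ideal.span_iUnion]
  exact iSup_sup_iSup_eq_iSup_sup_sup_biSup _ _ _

/-- the decomposition `(§)` in the proof of Theorem 2.12: for an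
increasing weighted tree `G_ω` and a nonempty independent set `S`, the saturation `I[S]`
decomposes as `Σ_{i=1}^k (r_i^{ν_S(r_i)}, I(T^i_ω)) + Σ_{i=k+1}^ℓ I(T^i_ω)`, where
`T^1, …, T^k` are the components of `G_S` meeting `N_G(S)`, with
`V(T^i) ∩ N_G(S) = {r_i}`, and the remaining summands range over the other components. -/
theorem saturation_decomposition {n : ℕ} (K : Type*) [Field K]
    (G : SimpleGraph (Fin n)) (ω : Fin n → Fin n → ℕ)
    (hsym : ∀ a b, ω a b = ω b a) (hpos : ∀ a b, G.Adj a b → 0 < ω a b)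
    (v : Fin n) (hG : IsIncreasingWeightedTree G ω v)
    (S : Finset (Fin n)) (hSne : S.Nonempty) (hS : IsIndepSetOn G ↑S)
    (k : ℕ) (r : Fin k → Fin n) (hr : Function.Injective r)
    (hrange : Set.range r = setNbhd G ↑S)
    (hcomp : ∀ i : Fin k,
      ((GSgraph G ω ↑S).connectedComponentMk (r i)).supp ∩ setNbhd G ↑S = {r i}) :
    satSet (weightedEdgeIdeal n K G ω) S =
      (⨆ i : Fin k,
        (Ideal.span {(X (r i) : MvPolynomial (Fin n) K) ^ nuWt G ω ↑S (r i)} ⊔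
          componentEdgeIdeal n K (GSgraph G ω ↑S) ω
            ((GSgraph G ω ↑S).connectedComponentMk (r i)))) ⊔
      ⨆ c ∈ {c : (GSgraph G ω ↑S).ConnectedComponent |
          ∀ i : Fin k, c ≠ (GSgraph G ω ↑S).connectedComponentMk (r i)},
        componentEdgeIdeal n K (GSgraph G ω ↑S) ω c :=
  saturation_decomposition_general K G ω hsym S hS k r hrange
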